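/- The quotient of the wreathed 2-group W by its center is isomorphic to the dihedral group of order 2^{n+1}: W/Z(W) ≅ D_{2^{n+1}}. -/

import Mathlib

namespace Wreathed

/-- The cyclic group of order `2^n`. -/
abbrev C (n : ℕ) : Type := Multiplicative (ZMod (2^n))

/-- The coordinate-swapping automorphism of `C n × C n`. -/
def swapAut (n : ℕ) : MulAut (C n × C n) := MulEquiv.prodComm

lemma swapAut_mul_self (n : ℕ) : swapAut n * swapAut n = 1 := by
  ext x <;> rfl

lemma two_cases (x : Multiplicative (ZMod 2)) :
    x = 1 ∨ x = Multiplicative.ofAdd 1 := by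
  revert x; decide

/-- The action of `C_2` on `C n × C n` by swapping the two coordinates. -/
def act (n : ℕ) : Multiplicative (ZMod 2) →* MulAut (C n × C n) where
  toFun x := if x = 1 then 1 else swapAut n
  map_one' := if_pos rfl
  map_mul' := by
    have h11 : (Multiplicative.ofAdd 1 : Multiplicative (ZMod 2)) *
        Multiplicative.ofAdd 1 = 1 := by decide
    have h1ne : (Multiplicative.ofAdd 1 : Multiplicative (ZMod 2)) ≠ 1 := by decide
    intro x y
    rcases two_cases x with hx | hx <;> rcases two_cases y with hy | hy <;>
      subst hx <;> subst hy <;>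
      simp [h11, h1ne, swapAut_mul_self]

/-- The wreathed 2-group `W = (C_{2^n} × C_{2^n}) ⋊ C_2`,
i.e. the wreath product `Z_{2^n} ≀ Z_2`. -/
abbrev W (n : ℕ) : Type := (C n × C n) ⋊[act n] (Multiplicative (ZMod 2))

/-- The element `a = ((g,1); 0)`. -/
def a (n : ℕ) : W n := SemidirectProduct.inl (Multiplicative.ofAdd 1, 1)

/-- The element `b = ((1,g); 0)`. -/
def b (n : ℕ) : W n := SemidirectProduct.inl (1, Multiplicative.ofAdd 1)

/-- The element `t = ((1,1); 1)`. -/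
def t (n : ℕ) : W n := SemidirectProduct.inr (Multiplicative.ofAdd 1)

/-- The base subgroup `A = ⟨a, b⟩`. -/
def A (n : ℕ) : Subgroup (W n) := Subgroup.closure {a n, b n}

/-- The diagonal `Δ = ⟨ab⟩`. -/
def diag (n : ℕ) : Subgroup (W n) := Subgroup.zpowers (a n * b n)

/-- The anti-diagonal `Δ⁻ = ⟨ab⁻¹⟩`. -/
def antidiag (n : ℕ) : Subgroup (W n) := Subgroup.zpowers (a n * (b n)⁻¹)


/-! The map `((x, y); e) ↦ r^(y - x) s^e` is a surjective homomorphism `W → D_{2^{n+1}}`: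
conjugation by `t` swaps the coordinates, which negates `y - x`, just as conjugation by `s`
inverts rotations. Its kernel is the diagonal `{((x, x); 0)}`, and that is exactly the center:
an element commuting with `a` lies in the base group since `g ≠ 1`, and a base element commuting
with `t` is invariant under the swap. -/

open DihedralGroup SemidirectProduct

lemma ofAdd_one_mul_self :
    (Multiplicative.ofAdd 1 * Multiplicative.ofAdd 1 : Multiplicative (ZMod 2)) = 1 := by decide

lemma act_ofAdd_one (n : ℕ) : act n (Multiplicative.ofAdd 1) = swapAut n := by
  simp [act]

lemma act_apply_self_self (n : ℕ) (e : Multiplicative (ZMod 2)) (x : C n) :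
    act n e (x, x) = (x, x) := by
  rcases two_cases e with rfl | rfl
  · rfl
  · rw [act_ofAdd_one]; rfl

def rotationOfDiff (m : ℕ) :
    Multiplicative (ZMod m) × Multiplicative (ZMod m) →* DihedralGroup m where
  toFun p := r (p.2.toAdd - p.1.toAdd)
  map_one' := by simp
  map_mul' p q := by
    simp only [Prod.fst_mul, Prod.snd_mul, toAdd_mul, r_mul_r]
    congr 1; ring

def reflection (m : ℕ) : Multiplicative (ZMod 2) →* DihedralGroup m where
  toFun e := if e = 1 then 1 else sr 0
  map_one' := if_pos rfl
  map_mul' e f := by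
    rcases two_cases e with rfl | rfl <;> rcases two_cases f with rfl | rfl <;>
      simp [ofAdd_one_mul_self]

lemma rotationOfDiff_comp_act (n : ℕ) (e : Multiplicative (ZMod 2)) :
    (rotationOfDiff (2 ^ n)).comp (act n e).toMonoidHom =
      (MulAut.conj (reflection (2 ^ n) e)).toMonoidHom.comp (rotationOfDiff (2 ^ n)) := by
  ext p; rcases two_cases e with rfl | rfl <;>
    simp [rotationOfDiff, reflection, act_ofAdd_one, swapAut]

def toDihedral (n : ℕ) : W n →* DihedralGroup (2 ^ n) :=
  lift (rotationOfDiff (2 ^ n)) (reflection (2 ^ n)) (rotationOfDiff_comp_act n)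

lemma toDihedral_surjective (n : ℕ) : Function.Surjective (toDihedral n) := by
  rintro (i | i)
  · exact ⟨inl (1, .ofAdd i), by simp [toDihedral, rotationOfDiff]⟩
  · refine ⟨inl (.ofAdd i, 1) * inr (.ofAdd 1), ?_⟩
    simp [toDihedral, rotationOfDiff, reflection]

lemma toDihedral_mk (n : ℕ) (p : C n × C n) (e : Multiplicative (ZMod 2)) :
    toDihedral n ⟨p, e⟩ = r (p.2.toAdd - p.1.toAdd) * if e = 1 then 1 else sr 0 :=
  rfl

lemma toDihedral_eq_one_iff {n : ℕ} {w : W n} :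
    toDihedral n w = 1 ↔ w.right = 1 ∧ w.left.1 = w.left.2 := by
  obtain ⟨⟨x, y⟩, e⟩ := w
  rcases two_cases e with rfl | rfl
  · rw [toDihedral_mk, if_pos rfl, mul_one, one_def, r.injEq, sub_eq_zero,
      EmbeddingLike.apply_eq_iff_eq, eq_comm]
    simp
  · simp [toDihedral_mk, one_def, -r_zero, -mk_eq_inl_mul_inr]

lemma mem_center_of_right_eq_one_of_fst_eq_snd {n : ℕ} {w : W n} (hr : w.right = 1)
    (hl : w.left.1 = w.left.2) : w ∈ Subgroup.center (W n) := by
  obtain ⟨⟨x, y⟩, e⟩ := w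
  dsimp only at hr hl
  subst hr hl
  refine Subgroup.mem_center_iff.2 fun v ↦ SemidirectProduct.ext ?_ (by simp)
  simp [act_apply_self_self, mul_comm]

lemma right_eq_one_of_commute_a {n : ℕ} (hn : n ≠ 0) {w : W n} (h : a n * w = w * a n) :
    w.right = 1 := by
  obtain ⟨⟨x, y⟩, e⟩ := w
  rcases two_cases e with rfl | rfl
  · rfl
  · -- the first coordinates of `a w` and `w a` are `g x` and `x`
    have h1 : (1 : ZMod (2 ^ n)) = 0 := by
      simpa [a, act_ofAdd_one, swapAut] using congrArg (fun v : W n ↦ v.left.1.toAdd) h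
    simp [ZMod.one_eq_zero_iff, hn] at h1

lemma fst_eq_snd_of_commute_t {n : ℕ} {w : W n} (hr : w.right = 1) (h : t n * w = w * t n) :
    w.left.1 = w.left.2 := by
  obtain ⟨⟨x, y⟩, e⟩ := w
  dsimp only at hr ⊢
  subst hr
  simpa [t, act_ofAdd_one, swapAut, eq_comm] using congrArg (fun v : W n ↦ v.left.1) h

lemma mem_center_iff {n : ℕ} (hn : n ≠ 0) {w : W n} :
    w ∈ Subgroup.center (W n) ↔ w.right = 1 ∧ w.left.1 = w.left.2 := by
  refine ⟨fun hw ↦ ?_, fun ⟨hr, hl⟩ ↦ mem_center_of_right_eq_one_of_fst_eq_snd hr hl⟩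
  have hr := right_eq_one_of_commute_a hn (Subgroup.mem_center_iff.1 hw (a n))
  exact ⟨hr, fst_eq_snd_of_commute_t hr (Subgroup.mem_center_iff.1 hw (t n))⟩

lemma ker_toDihedral {n : ℕ} (hn : n ≠ 0) : (toDihedral n).ker = Subgroup.center (W n) := by
  ext w
  rw [MonoidHom.mem_ker, toDihedral_eq_one_iff, mem_center_iff hn]

end Wreathed

open Wreathed in
/-- The quotient of the wreathed 2-group by its center is dihedral of order `2^{n+1}`. -/
theorem wreathed_quotient_center_dihedral (n : ℕ) (hn : 2 ≤ n) :
    Nonempty ((W n ⧸ Subgroup.center (W n)) ≃* DihedralGroup (2 ^ n)) :=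
  ⟨(QuotientGroup.quotientMulEquivOfEq (ker_toDihedral (by omega)).symm).trans
    (QuotientGroup.quotientKerEquivOfSurjective _ (toDihedral_surjective n))⟩
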